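/- arXiv:2511.09367 — 2 statements merged into one kernel-verified Lean document; each statement's English description precedes it below -/
import Mathlib

section
/- For every real number α with 0 < α < 2 and α ≠ 1, the quantity (2^(1-α) + α - 2)/(1 - α) is strictly negative. -/
/-! With `t = 1 - α` the numerator is `2 ^ t - (1 + t)`, so the claim says that Bernoulli's
inequality `(1 + 1) ^ t ≶ 1 + t` is strict and reverses direction as `t` crosses `0`. -/

theorem one_add_mul_self_lt_rpow_one_add_of_neg {s : ℝ} (hs : -1 < s) (hs' : s ≠ 0) {p : ℝ}
    (hp1 : -1 < p) (hp2 : p < 0) : 1 + p * s < (1 + s) ^ p := by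
  have hbase : 0 < 1 + s := by linarith
  have hpow : (1 + s) ^ (-p) < 1 + -p * s :=
    rpow_one_add_lt_one_add_mul_self hs.le hs' (by linarith) (by linarith)
  have hpos : 0 < (1 + s) ^ (-p) := Real.rpow_pos_of_pos hbase _
  calc 1 + p * s ≤ (1 + -p * s)⁻¹ := by
        rw [← one_div, le_div_iff₀ (by linarith)]
        nlinarith [sq_nonneg (p * s)]
    _ < ((1 + s) ^ (-p))⁻¹ := inv_strictAnti₀ hpos hpow
    _ = (1 + s) ^ p := by rw [Real.rpow_neg hbase.le, inv_inv]

theorem stmt_0 (α : ℝ) (h0 : 0 < α) (h2 : α < 2) (h1 : α ≠ 1) :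
    ((2:ℝ) ^ (1 - α) + α - 2) / (1 - α) < 0 := by
  have htwo : (1 + 1 : ℝ) = 2 := by norm_num
  rcases lt_or_gt_of_ne (sub_ne_zero_of_ne h1.symm) with hneg | hpos
  · have hbern := one_add_mul_self_lt_rpow_one_add_of_neg (s := 1) (by norm_num) one_ne_zero
      (p := 1 - α) (by linarith) hneg
    rw [htwo] at hbern
    exact div_neg_of_pos_of_neg (by linarith) hneg
  · have hbern := rpow_one_add_lt_one_add_mul_self (s := 1) (by norm_num) one_ne_zero
      (p := 1 - α) hpos (by linarith)
    rw [htwo] at hbern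
    exact div_neg_of_neg_of_pos (by linarith) hpos
end

section
/- Let a < b be reals, α ∈ (0,2)\{1}, and a = x_0 < x_1 < ⋯ < x_N = b a partition with h_i = x_i − x_{i−1}. Fix 1 ≤ i ≤ N−1 and let g(y) = u(x_i) − Π_h u(y) where Π_h u is the piecewise linear interpolant of u. Then lim_{δ→0⁺} [ ∫_{(x_{i−1}, x_{i+1}) \ (x_i−δ, x_i+δ)} g(y)|x_i − y|^{−1−α} dy − (δ^{1−α}/(1−α))·( u_{i−1}/h_i − (1/h_i + 1/h_{i+1}) u_i + u_{i+1}/h_{i+1} ) ] = −h_i^{−α} u_{i−1}/(1−α) + (h_i^{−α} + h_{i+1}^{−α}) u_i/(1−α) − h_{i+1}^{−α} u_{i+1}/(1−α). -/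
open Filter

theorem stmt_18 (α : ℝ) (h0 : 0 < α) (h2 : α < 2) (h1 : α ≠ 1)
    (xm xi xp um ui up : ℝ) (hm : xm < xi) (hp : xi < xp) :
    Tendsto (fun δ : ℝ =>
      (∫ y in xm..(xi - δ),
          (ui - (um * (xi - y) + ui * (y - xm)) / (xi - xm)) * (xi - y) ^ (-1 - α)) +
      (∫ y in (xi + δ)..xp,
          (ui - (ui * (xp - y) + up * (y - xi)) / (xp - xi)) * (y - xi) ^ (-1 - α)) -
      δ ^ (1 - α) / (1 - α) *
        (um / (xi - xm) - (1 / (xi - xm) + 1 / (xp - xi)) * ui + up / (xp - xi)))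
      (nhdsWithin 0 (Set.Ioi 0))
      (nhds (-(xi - xm) ^ (-α) * um / (1 - α) +
        ((xi - xm) ^ (-α) + (xp - xi) ^ (-α)) * ui / (1 - α) -
        (xp - xi) ^ (-α) * up / (1 - α))) := by
  have hh0 : (0:ℝ) < xi - xm := by linarith
  have hH0 : (0:ℝ) < xp - xi := by linarith
  have h1' : 1 - α ≠ 0 := fun h => h1 (by linarith)
  refine tendsto_const_nhds.congr' ?_
  filter_upwards [Ioo_mem_nhdsGT_of_mem (Set.left_mem_Ico.2 (lt_min hh0 hH0))] with δ hδ
  obtain ⟨hδ0, hδlt⟩ := hδ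
  have hδh := lt_of_lt_of_le hδlt (min_le_left _ _)
  have hδH := lt_of_lt_of_le hδlt (min_le_right _ _)
  have hne : -α ≠ -1 := fun h => h1 (by linarith [neg_injective h])
  have I1 : (∫ y in xm..(xi - δ),
        (ui - (um * (xi - y) + ui * (y - xm)) / (xi - xm)) * (xi - y) ^ (-1 - α))
      = (ui - um) / (xi - xm) * (((xi - xm) ^ (1 - α) - δ ^ (1 - α)) / (1 - α)) := by
    have hcong : ∀ y ∈ Set.uIcc xm (xi - δ),
        (ui - (um * (xi - y) + ui * (y - xm)) / (xi - xm)) * (xi - y) ^ (-1 - α)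
        = (ui - um) / (xi - xm) * (xi - y) ^ (-α) := by
      intro y hy
      rw [Set.uIcc_of_le (by linarith)] at hy
      have hpos : 0 < xi - y := by have := hy.2; linarith
      have e1 : ui - (um * (xi - y) + ui * (y - xm)) / (xi - xm)
          = (ui - um) * (xi - y) / (xi - xm) := by
        field_simp; ring
      have e2 : (xi - y) ^ (-α) = (xi - y) * (xi - y) ^ (-1 - α) := by
        rw [show (-α) = 1 + (-1 - α) by ring, Real.rpow_add hpos, Real.rpow_one]
      rw [e1, e2]; ring
    rw [intervalIntegral.integral_congr hcong, intervalIntegral.integral_const_mul]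
    congr 1
    have hsub : (∫ y in xm..(xi - δ), (xi - y) ^ (-α))
        = ∫ t in δ..(xi - xm), t ^ (-α) := by
      have := intervalIntegral.integral_comp_sub_left (a := xm) (b := xi - δ)
        (fun t => t ^ (-α)) xi
      simpa using this
    rw [hsub, integral_rpow (Or.inr ⟨hne, Set.notMem_uIcc_of_lt hδ0 hh0⟩)]
    rw [show -α + 1 = 1 - α by ring]
  have I2 : (∫ y in (xi + δ)..xp,
        (ui - (ui * (xp - y) + up * (y - xi)) / (xp - xi)) * (y - xi) ^ (-1 - α))
      = (ui - up) / (xp - xi) * (((xp - xi) ^ (1 - α) - δ ^ (1 - α)) / (1 - α)) := by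
    have hcong : ∀ y ∈ Set.uIcc (xi + δ) xp,
        (ui - (ui * (xp - y) + up * (y - xi)) / (xp - xi)) * (y - xi) ^ (-1 - α)
        = (ui - up) / (xp - xi) * (y - xi) ^ (-α) := by
      intro y hy
      rw [Set.uIcc_of_le (by linarith)] at hy
      have hpos : 0 < y - xi := by have := hy.1; linarith
      have e1 : ui - (ui * (xp - y) + up * (y - xi)) / (xp - xi)
          = (ui - up) * (y - xi) / (xp - xi) := by
        field_simp; ring
      have e2 : (y - xi) ^ (-α) = (y - xi) * (y - xi) ^ (-1 - α) := by
        rw [show (-α) = 1 + (-1 - α) by ring, Real.rpow_add hpos, Real.rpow_one]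
      rw [e1, e2]; ring
    rw [intervalIntegral.integral_congr hcong, intervalIntegral.integral_const_mul]
    congr 1
    have hsub : (∫ y in (xi + δ)..xp, (y - xi) ^ (-α))
        = ∫ t in δ..(xp - xi), t ^ (-α) := by
      have := intervalIntegral.integral_comp_sub_right (a := xi + δ) (b := xp)
        (fun t => t ^ (-α)) xi
      simpa using this
    rw [hsub, integral_rpow (Or.inr ⟨hne, Set.notMem_uIcc_of_lt hδ0 hH0⟩)]
    rw [show -α + 1 = 1 - α by ring]
  rw [I1, I2]
  have eh : (xi - xm) ^ (1 - α) = (xi - xm) * (xi - xm) ^ (-α) := by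
    rw [show (1 - α) = 1 + (-α) by ring, Real.rpow_add hh0, Real.rpow_one]
  have eH : (xp - xi) ^ (1 - α) = (xp - xi) * (xp - xi) ^ (-α) := by
    rw [show (1 - α) = 1 + (-α) by ring, Real.rpow_add hH0, Real.rpow_one]
  rw [eh, eH]
  field_simp
  ring
end
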